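/- Under the log-loss, the difference between the MER of conventional Bayesian learning (ignoring meta-training data) and the MEMR of meta-learning equals I(Z_{1:N}; Y | X, Z) ≥ 0; hence meta-learning never has larger minimum excess risk than conventional learning. -/
import Mathlib


open scoped BigOperators

/-- Distribution (pushforward) of a random variable `X` under weights `p`. -/
noncomputable def distOf {Ω α : Type*} [Fintype Ω] [DecidableEq α]
    (p : Ω → ℝ) (X : Ω → α) (a : α) : ℝ :=
  ∑ ω, if X ω = a then p ω else 0

/-- Shannon entropy of a random variable. -/
noncomputable def entOf {Ω α : Type*} [Fintype Ω] [Fintype α] [DecidableEq α]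
    (p : Ω → ℝ) (X : Ω → α) : ℝ :=
  -∑ a, distOf p X a * Real.log (distOf p X a)

/-- Conditional entropy H(Y|X). -/
noncomputable def condEntOf {Ω α β : Type*} [Fintype Ω] [Fintype α] [Fintype β]
    [DecidableEq α] [DecidableEq β] (p : Ω → ℝ) (Y : Ω → β) (X : Ω → α) : ℝ :=
  entOf p (fun ω => (Y ω, X ω)) - entOf p X

/-- Mutual information I(A;B). -/
noncomputable def miOf {Ω α β : Type*} [Fintype Ω] [Fintype α] [Fintype β]
    [DecidableEq α] [DecidableEq β] (p : Ω → ℝ) (A : Ω → α) (B : Ω → β) : ℝ :=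
  entOf p A + entOf p B - entOf p (fun ω => (A ω, B ω))

/-- Conditional mutual information I(A;B|C). -/
noncomputable def cmiOf {Ω α β γ : Type*} [Fintype Ω] [Fintype α] [Fintype β] [Fintype γ]
    [DecidableEq α] [DecidableEq β] [DecidableEq γ]
    (p : Ω → ℝ) (A : Ω → α) (B : Ω → β) (C : Ω → γ) : ℝ :=
  condEntOf p A C - condEntOf p A (fun ω => (B ω, C ω))

/-- `p` is a probability mass function on the finite sample space. -/
def IsPMF {Ω : Type*} [Fintype Ω] (p : Ω → ℝ) : Prop :=
  (∀ ω, 0 ≤ p ω) ∧ ∑ ω, p ω = 1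

/-- A and B are conditionally independent given C. -/
def CondIndep {Ω α β γ : Type*} [Fintype Ω] [DecidableEq α] [DecidableEq β] [DecidableEq γ]
    (p : Ω → ℝ) (A : Ω → α) (B : Ω → β) (C : Ω → γ) : Prop :=
  ∀ a b c, distOf p (fun ω => (A ω, B ω, C ω)) (a, b, c) * distOf p C c =
    distOf p (fun ω => (A ω, C ω)) (a, c) * distOf p (fun ω => (B ω, C ω)) (b, c)

/-- Equality in distribution. -/
def IdentDist {Ω α : Type*} [Fintype Ω] [DecidableEq α]
    (p : Ω → ℝ) (X Y : Ω → α) : Prop := ∀ a, distOf p X a = distOf p Y a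

/-- Bayesian risk: infimum over measurable (automatic here) decision rules of the
expected loss. -/
noncomputable def risk {Ω α 𝒞 𝒜 : Type*} [Fintype Ω]
    (p : Ω → ℝ) (ℓ : 𝒞 → 𝒜 → ℝ) (C : Ω → 𝒞) (A : Ω → α) : ℝ :=
  ⨅ ψ : α → 𝒜, ∑ ω, p ω * ℓ (C ω) (ψ (A ω))

set_option linter.unusedSectionVars false

section Aux

variable {Ω α β γ δ : Type*} [Fintype Ω] [Fintype α] [Fintype β] [Fintype γ] [Fintype δ]
  [DecidableEq α] [DecidableEq β] [DecidableEq γ] [DecidableEq δ] (p : Ω → ℝ)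

lemma distOf_nonneg (hp : ∀ ω, 0 ≤ p ω) (T : Ω → α) (a : α) : 0 ≤ distOf p T a := by
  apply Finset.sum_nonneg; intro ω _; split <;> simp [hp ω]

lemma sum_distOf (T : Ω → α) : ∑ a, distOf p T a = ∑ ω, p ω := by
  unfold distOf
  rw [Finset.sum_comm]
  refine Finset.sum_congr rfl fun ω _ => ?_
  simp

lemma distOf_comp_equiv (T : Ω → α) (e : α ≃ β) (b : β) :
    distOf p (fun ω => e (T ω)) b = distOf p T (e.symm b) := by
  unfold distOf
  refine Finset.sum_congr rfl fun ω _ => ?_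
  simp only [Equiv.eq_symm_apply]

lemma entOf_comp_equiv (T : Ω → α) (e : α ≃ β) :
    entOf p (fun ω => e (T ω)) = entOf p T := by
  unfold entOf
  rw [neg_inj]
  simp only [distOf_comp_equiv]
  exact Equiv.sum_comp e.symm (fun a => distOf p T a * Real.log (distOf p T a))

lemma condEntOf_comp_equiv (Y : Ω → δ) (C : Ω → α) (e : α ≃ β) :
    condEntOf p Y (fun ω => e (C ω)) = condEntOf p Y C := by
  unfold condEntOf
  rw [entOf_comp_equiv p C e]
  congr 1
  have := entOf_comp_equiv p (fun ω => (Y ω, C ω)) (Equiv.prodCongr (Equiv.refl δ) e)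
  simpa using this

lemma distOf_marg_snd (A : Ω → α) (B : Ω → β) (C : Ω → γ) (a : α) (c : γ) :
    distOf p (fun ω => (A ω, C ω)) (a, c)
      = ∑ b, distOf p (fun ω => (A ω, B ω, C ω)) (a, b, c) := by
  unfold distOf
  rw [Finset.sum_comm]
  refine Finset.sum_congr rfl fun ω _ => ?_
  by_cases h : A ω = a ∧ C ω = c
  · simp [Prod.ext_iff, h.1, h.2]
  · have h' : ∀ b, ¬ ((A ω, B ω, C ω) = (a, b, c)) := by
      intro b hb
      exact h ⟨congrArg Prod.fst hb, congrArg (fun t => t.2.2) hb⟩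
    have h'' : ¬ ((A ω, C ω) = (a, c)) := by
      intro hb; exact h ⟨congrArg Prod.fst hb, congrArg Prod.snd hb⟩
    simp [h', h'']

lemma distOf_marg_fst (A : Ω → α) (B : Ω → β) (C : Ω → γ) (b : β) (c : γ) :
    distOf p (fun ω => (B ω, C ω)) (b, c)
      = ∑ a, distOf p (fun ω => (A ω, B ω, C ω)) (a, b, c) := by
  unfold distOf
  rw [Finset.sum_comm]
  refine Finset.sum_congr rfl fun ω _ => ?_
  by_cases h : B ω = b ∧ C ω = c
  · simp [Prod.ext_iff, h.1, h.2]
  · have h' : ∀ a, ¬ ((A ω, B ω, C ω) = (a, b, c)) := by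
      intro a hb
      exact h ⟨congrArg (fun t => t.2.1) hb, congrArg (fun t => t.2.2) hb⟩
    have h'' : ¬ ((B ω, C ω) = (b, c)) := by
      intro hb; exact h ⟨congrArg Prod.fst hb, congrArg Prod.snd hb⟩
    simp [h', h'']

lemma distOf_marg_one (B : Ω → β) (C : Ω → γ) (c : γ) :
    distOf p C c = ∑ b, distOf p (fun ω => (B ω, C ω)) (b, c) := by
  unfold distOf
  rw [Finset.sum_comm]
  refine Finset.sum_congr rfl fun ω _ => ?_
  by_cases h : C ω = c
  · simp [Prod.ext_iff, h]
  · have h' : ∀ b, ¬ ((B ω, C ω) = (b, c)) := by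
      intro b hb; exact h (congrArg Prod.snd hb)
    simp [h', h]

lemma distOf_marg_pair (A : Ω → α) (B : Ω → β) (C : Ω → γ) (c : γ) :
    distOf p C c = ∑ a, ∑ b, distOf p (fun ω => (A ω, B ω, C ω)) (a, b, c) := by
  rw [distOf_marg_one p B C c]
  rw [Finset.sum_comm]
  refine Finset.sum_congr rfl fun b _ => ?_
  exact distOf_marg_fst p A B C b c

end Aux
section Aux2

variable {Ω α β γ : Type*} [Fintype Ω] [Fintype α] [Fintype β] [Fintype γ]
  [DecidableEq α] [DecidableEq β] [DecidableEq γ] (p : Ω → ℝ)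

lemma cmiOf_eq_sum (A : Ω → α) (B : Ω → β) (C : Ω → γ) :
    cmiOf p A B C = ∑ c, ∑ a, ∑ b,
      distOf p (fun ω => (A ω, B ω, C ω)) (a, b, c) *
        (Real.log (distOf p (fun ω => (A ω, B ω, C ω)) (a, b, c))
          + Real.log (distOf p C c)
          - Real.log (distOf p (fun ω => (A ω, C ω)) (a, c))
          - Real.log (distOf p (fun ω => (B ω, C ω)) (b, c))) := by
  unfold cmiOf condEntOf entOf
  simp only [Fintype.sum_prod_type]
  have hAC : (∑ a, ∑ c, distOf p (fun ω => (A ω, C ω)) (a, c) *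
        Real.log (distOf p (fun ω => (A ω, C ω)) (a, c)))
      = ∑ c, ∑ a, ∑ b, distOf p (fun ω => (A ω, B ω, C ω)) (a, b, c) *
        Real.log (distOf p (fun ω => (A ω, C ω)) (a, c)) := by
    rw [Finset.sum_comm]
    refine Finset.sum_congr rfl fun c _ => Finset.sum_congr rfl fun a _ => ?_
    nth_rewrite 1 [distOf_marg_snd p A B C a c]
    rw [Finset.sum_mul]
  have hBC : (∑ b, ∑ c, distOf p (fun ω => (B ω, C ω)) (b, c) *
        Real.log (distOf p (fun ω => (B ω, C ω)) (b, c)))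
      = ∑ c, ∑ a, ∑ b, distOf p (fun ω => (A ω, B ω, C ω)) (a, b, c) *
        Real.log (distOf p (fun ω => (B ω, C ω)) (b, c)) := by
    rw [Finset.sum_comm]
    refine Finset.sum_congr rfl fun c _ => ?_
    have h1 : ∀ b : β, distOf p (fun ω => (B ω, C ω)) (b, c) *
          Real.log (distOf p (fun ω => (B ω, C ω)) (b, c))
        = ∑ a, distOf p (fun ω => (A ω, B ω, C ω)) (a, b, c) *
          Real.log (distOf p (fun ω => (B ω, C ω)) (b, c)) := by
      intro b
      nth_rewrite 1 [distOf_marg_fst p A B C b c]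
      rw [Finset.sum_mul]
    rw [Finset.sum_congr rfl (fun b _ => h1 b), Finset.sum_comm]
  have hC : (∑ c, distOf p C c * Real.log (distOf p C c))
      = ∑ c, ∑ a, ∑ b, distOf p (fun ω => (A ω, B ω, C ω)) (a, b, c) *
        Real.log (distOf p C c) := by
    refine Finset.sum_congr rfl fun c _ => ?_
    nth_rewrite 1 [distOf_marg_pair p A B C c]
    rw [Finset.sum_mul]
    exact Finset.sum_congr rfl fun a _ => Finset.sum_mul _ _ _
  have hQ : (∑ a, ∑ b, ∑ c, distOf p (fun ω => (A ω, B ω, C ω)) (a, b, c) *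
        Real.log (distOf p (fun ω => (A ω, B ω, C ω)) (a, b, c)))
      = ∑ c, ∑ a, ∑ b, distOf p (fun ω => (A ω, B ω, C ω)) (a, b, c) *
        Real.log (distOf p (fun ω => (A ω, B ω, C ω)) (a, b, c)) := by
    have h2 : ∀ a : α, (∑ b, ∑ c, distOf p (fun ω => (A ω, B ω, C ω)) (a, b, c) *
          Real.log (distOf p (fun ω => (A ω, B ω, C ω)) (a, b, c)))
        = ∑ c, ∑ b, distOf p (fun ω => (A ω, B ω, C ω)) (a, b, c) *
          Real.log (distOf p (fun ω => (A ω, B ω, C ω)) (a, b, c)) :=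
      fun a => Finset.sum_comm
    rw [Finset.sum_congr rfl (fun a _ => h2 a)]
    exact Finset.sum_comm
  rw [hAC, hBC, hC, hQ]
  simp only [mul_add, mul_sub, Finset.sum_add_distrib, Finset.sum_sub_distrib]
  ring

end Aux2
section Aux3

variable {Ω α β γ δ : Type*} [Fintype Ω] [Fintype α] [Fintype β] [Fintype γ] [Fintype δ]
  [DecidableEq α] [DecidableEq β] [DecidableEq γ] [DecidableEq δ] (p : Ω → ℝ)

lemma q_le_mC (hp0 : ∀ ω, 0 ≤ p ω) (A : Ω → α) (B : Ω → β) (C : Ω → γ) (a : α) (b : β) (c : γ) :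
    distOf p (fun ω => (A ω, B ω, C ω)) (a, b, c) ≤ distOf p C c := by
  rw [distOf_marg_pair p A B C c]
  calc distOf p (fun ω => (A ω, B ω, C ω)) (a, b, c)
      ≤ ∑ b', distOf p (fun ω => (A ω, B ω, C ω)) (a, b', c) :=
        Finset.single_le_sum (f := fun b' => distOf p (fun ω => (A ω, B ω, C ω)) (a, b', c))
          (fun b' _ => distOf_nonneg p hp0 _ _) (Finset.mem_univ b)
    _ ≤ ∑ a', ∑ b', distOf p (fun ω => (A ω, B ω, C ω)) (a', b', c) :=
        Finset.single_le_sum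
          (f := fun a' => ∑ b', distOf p (fun ω => (A ω, B ω, C ω)) (a', b', c))
          (fun a' _ => Finset.sum_nonneg fun b' _ => distOf_nonneg p hp0 _ _)
          (Finset.mem_univ a)

lemma q_le_mAC (hp0 : ∀ ω, 0 ≤ p ω) (A : Ω → α) (B : Ω → β) (C : Ω → γ) (a : α) (b : β) (c : γ) :
    distOf p (fun ω => (A ω, B ω, C ω)) (a, b, c) ≤ distOf p (fun ω => (A ω, C ω)) (a, c) := by
  rw [distOf_marg_snd p A B C a c]
  exact Finset.single_le_sum (f := fun b' => distOf p (fun ω => (A ω, B ω, C ω)) (a, b', c))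
    (fun b' _ => distOf_nonneg p hp0 _ _) (Finset.mem_univ b)

lemma q_le_mBC (hp0 : ∀ ω, 0 ≤ p ω) (A : Ω → α) (B : Ω → β) (C : Ω → γ) (a : α) (b : β) (c : γ) :
    distOf p (fun ω => (A ω, B ω, C ω)) (a, b, c) ≤ distOf p (fun ω => (B ω, C ω)) (b, c) := by
  rw [distOf_marg_fst p A B C b c]
  exact Finset.single_le_sum (f := fun a' => distOf p (fun ω => (A ω, B ω, C ω)) (a', b, c))
    (fun a' _ => distOf_nonneg p hp0 _ _) (Finset.mem_univ a)

lemma cmiOf_nonneg (hp : IsPMF p) (A : Ω → α) (B : Ω → β) (C : Ω → γ) :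
    0 ≤ cmiOf p A B C := by
  obtain ⟨hp0, hp1⟩ := hp
  rw [cmiOf_eq_sum]
  have hkey : ∀ c a b,
      distOf p (fun ω => (A ω, B ω, C ω)) (a, b, c)
        - distOf p (fun ω => (A ω, C ω)) (a, c) * distOf p (fun ω => (B ω, C ω)) (b, c)
            / distOf p C c
      ≤ distOf p (fun ω => (A ω, B ω, C ω)) (a, b, c) *
        (Real.log (distOf p (fun ω => (A ω, B ω, C ω)) (a, b, c))
          + Real.log (distOf p C c)
          - Real.log (distOf p (fun ω => (A ω, C ω)) (a, c))
          - Real.log (distOf p (fun ω => (B ω, C ω)) (b, c))) := by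
    intro c a b
    set Q := distOf p (fun ω => (A ω, B ω, C ω)) (a, b, c) with hQdef
    set u := distOf p (fun ω => (A ω, C ω)) (a, c) with hudef
    set v := distOf p (fun ω => (B ω, C ω)) (b, c) with hvdef
    set m := distOf p C c with hmdef
    have hu0 : 0 ≤ u := distOf_nonneg p hp0 _ _
    have hv0 : 0 ≤ v := distOf_nonneg p hp0 _ _
    have hm0 : 0 ≤ m := distOf_nonneg p hp0 _ _
    have hQ0 : 0 ≤ Q := distOf_nonneg p hp0 _ _
    by_cases hQ : Q = 0
    · rw [hQ]
      have : 0 ≤ u * v / m := div_nonneg (mul_nonneg hu0 hv0) hm0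
      simp only [zero_mul, zero_sub]
      linarith
    · have hQpos : 0 < Q := lt_of_le_of_ne hQ0 (Ne.symm hQ)
      have hum : 0 < u := lt_of_lt_of_le hQpos (q_le_mAC p hp0 A B C a b c)
      have hvm : 0 < v := lt_of_lt_of_le hQpos (q_le_mBC p hp0 A B C a b c)
      have hmm : 0 < m := lt_of_lt_of_le hQpos (q_le_mC p hp0 A B C a b c)
      have hlogeq : Real.log Q + Real.log m - Real.log u - Real.log v
          = Real.log (Q * m / (u * v)) := by
        rw [Real.log_div (by positivity) (by positivity),
            Real.log_mul (ne_of_gt hQpos) (ne_of_gt hmm),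
            Real.log_mul (ne_of_gt hum) (ne_of_gt hvm)]
        ring
      rw [hlogeq]
      have hx : 0 < u * v / (Q * m) := by positivity
      have hlog := Real.log_le_sub_one_of_pos hx
      have hinv : Real.log (u * v / (Q * m)) = - Real.log (Q * m / (u * v)) := by
        rw [← Real.log_inv, inv_div]
      rw [hinv] at hlog
      have h1 : 1 - u * v / (Q * m) ≤ Real.log (Q * m / (u * v)) := by linarith
      have h2 := mul_le_mul_of_nonneg_left h1 (le_of_lt hQpos)
      have h3 : Q * (1 - u * v / (Q * m)) = Q - u * v / m := by
        field_simp
      linarith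
  have hsum : ∑ c, ∑ a, ∑ b,
      (distOf p (fun ω => (A ω, B ω, C ω)) (a, b, c)
        - distOf p (fun ω => (A ω, C ω)) (a, c) * distOf p (fun ω => (B ω, C ω)) (b, c)
            / distOf p C c)
      ≤ ∑ c, ∑ a, ∑ b, distOf p (fun ω => (A ω, B ω, C ω)) (a, b, c) *
        (Real.log (distOf p (fun ω => (A ω, B ω, C ω)) (a, b, c))
          + Real.log (distOf p C c)
          - Real.log (distOf p (fun ω => (A ω, C ω)) (a, c))
          - Real.log (distOf p (fun ω => (B ω, C ω)) (b, c))) := by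
    refine Finset.sum_le_sum fun c _ => Finset.sum_le_sum fun a _ =>
      Finset.sum_le_sum fun b _ => hkey c a b
  have hQ1 : ∑ c, ∑ a, ∑ b, distOf p (fun ω => (A ω, B ω, C ω)) (a, b, c) = 1 := by
    have : ∀ c : γ, (∑ a, ∑ b, distOf p (fun ω => (A ω, B ω, C ω)) (a, b, c))
        = distOf p C c := fun c => (distOf_marg_pair p A B C c).symm
    rw [Finset.sum_congr rfl (fun c _ => this c), sum_distOf, hp1]
  have hD1 : ∑ c, ∑ a, ∑ b,
      distOf p (fun ω => (A ω, C ω)) (a, c) * distOf p (fun ω => (B ω, C ω)) (b, c)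
        / distOf p C c ≤ 1 := by
    have hc : ∀ c : γ, (∑ a, ∑ b,
        distOf p (fun ω => (A ω, C ω)) (a, c) * distOf p (fun ω => (B ω, C ω)) (b, c)
          / distOf p C c) ≤ distOf p C c := by
      intro c
      have e1 : (∑ a, ∑ b,
          distOf p (fun ω => (A ω, C ω)) (a, c) * distOf p (fun ω => (B ω, C ω)) (b, c)
            / distOf p C c)
          = (∑ a, distOf p (fun ω => (A ω, C ω)) (a, c))
            * (∑ b, distOf p (fun ω => (B ω, C ω)) (b, c)) / distOf p C c := by
        rw [Finset.sum_mul, Finset.sum_div]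
        refine Finset.sum_congr rfl fun a _ => ?_
        rw [Finset.mul_sum, Finset.sum_div]
      rw [e1, ← distOf_marg_one p A C c, ← distOf_marg_one p B C c]
      by_cases hm : distOf p C c = 0
      · rw [hm]; simp
      · rw [mul_div_assoc, div_self hm, mul_one]
    calc _ ≤ ∑ c, distOf p C c := Finset.sum_le_sum fun c _ => hc c
      _ = 1 := by rw [sum_distOf, hp1]
  have h2 : ∑ c, ∑ a, ∑ b,
      (distOf p (fun ω => (A ω, B ω, C ω)) (a, b, c)
        - distOf p (fun ω => (A ω, C ω)) (a, c) * distOf p (fun ω => (B ω, C ω)) (b, c)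
            / distOf p C c)
      = (∑ c, ∑ a, ∑ b, distOf p (fun ω => (A ω, B ω, C ω)) (a, b, c))
        - ∑ c, ∑ a, ∑ b,
          distOf p (fun ω => (A ω, C ω)) (a, c) * distOf p (fun ω => (B ω, C ω)) (b, c)
            / distOf p C c := by
    simp [Finset.sum_sub_distrib]
  linarith

end Aux3
section Aux4

variable {Ω α β γ δ : Type*} [Fintype Ω] [Fintype α] [Fintype β] [Fintype γ] [Fintype δ]
  [DecidableEq α] [DecidableEq β] [DecidableEq γ] [DecidableEq δ] (p : Ω → ℝ)

lemma cmiOf_eq_zero_of_condIndep (hp : IsPMF p) (A : Ω → α) (B : Ω → β) (C : Ω → γ)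
    (h : CondIndep p A B C) : cmiOf p A B C = 0 := by
  obtain ⟨hp0, _⟩ := hp
  rw [cmiOf_eq_sum]
  refine Finset.sum_eq_zero fun c _ => Finset.sum_eq_zero fun a _ =>
    Finset.sum_eq_zero fun b _ => ?_
  set Q := distOf p (fun ω => (A ω, B ω, C ω)) (a, b, c) with hQdef
  set u := distOf p (fun ω => (A ω, C ω)) (a, c) with hudef
  set v := distOf p (fun ω => (B ω, C ω)) (b, c) with hvdef
  set m := distOf p C c with hmdef
  by_cases hQ : Q = 0
  · rw [hQ, zero_mul]
  · have hQpos : 0 < Q := lt_of_le_of_ne (distOf_nonneg p hp0 _ _) (Ne.symm hQ)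
    have hum : 0 < u := lt_of_lt_of_le hQpos (q_le_mAC p hp0 A B C a b c)
    have hvm : 0 < v := lt_of_lt_of_le hQpos (q_le_mBC p hp0 A B C a b c)
    have hmm : 0 < m := lt_of_lt_of_le hQpos (q_le_mC p hp0 A B C a b c)
    have hci := h a b c
    have hlog : Real.log (Q * m) = Real.log (u * v) := by rw [hci]
    rw [Real.log_mul (ne_of_gt hQpos) (ne_of_gt hmm),
        Real.log_mul (ne_of_gt hum) (ne_of_gt hvm)] at hlog
    have : Real.log Q + Real.log m - Real.log u - Real.log v = 0 := by linarith
    rw [this, mul_zero]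

lemma condEntOf_of_condIndep (hp : IsPMF p) (A : Ω → α) (B : Ω → β) (C : Ω → γ)
    (h : CondIndep p A B C) :
    condEntOf p A (fun ω => (B ω, C ω)) = condEntOf p A C := by
  have h0 := cmiOf_eq_zero_of_condIndep p hp A B C h
  unfold cmiOf at h0
  linarith

lemma distOf_marg_mid (A : Ω → α) (B1 : Ω → β) (B2 : Ω → δ) (C : Ω → γ)
    (a : α) (b : β) (c : γ) :
    distOf p (fun ω => (A ω, B1 ω, C ω)) (a, b, c)
      = ∑ d, distOf p (fun ω => (A ω, (B1 ω, B2 ω), C ω)) (a, (b, d), c) := by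
  unfold distOf
  rw [Finset.sum_comm]
  refine Finset.sum_congr rfl fun ω _ => ?_
  by_cases h : A ω = a ∧ B1 ω = b ∧ C ω = c
  · simp [Prod.ext_iff, h.1, h.2.1, h.2.2]
  · have h' : ∀ d, ¬ ((A ω, (B1 ω, B2 ω), C ω) = (a, (b, d), c)) := by
      intro d hb
      exact h ⟨congrArg Prod.fst hb, congrArg (fun t => t.2.1.1) hb,
        congrArg (fun t => t.2.2) hb⟩
    have h'' : ¬ ((A ω, B1 ω, C ω) = (a, b, c)) := by
      intro hb
      exact h ⟨congrArg Prod.fst hb, congrArg (fun t => t.2.1) hb,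
        congrArg (fun t => t.2.2) hb⟩
    simp [h', h'']

lemma distOf_marg_mid2 (B1 : Ω → β) (B2 : Ω → δ) (C : Ω → γ) (b : β) (c : γ) :
    distOf p (fun ω => (B1 ω, C ω)) (b, c)
      = ∑ d, distOf p (fun ω => ((B1 ω, B2 ω), C ω)) ((b, d), c) := by
  unfold distOf
  rw [Finset.sum_comm]
  refine Finset.sum_congr rfl fun ω _ => ?_
  by_cases h : B1 ω = b ∧ C ω = c
  · simp [Prod.ext_iff, h.1, h.2]
  · have h' : ∀ d, ¬ (((B1 ω, B2 ω), C ω) = ((b, d), c)) := by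
      intro d hb
      exact h ⟨congrArg (fun t => t.1.1) hb, congrArg Prod.snd hb⟩
    have h'' : ¬ ((B1 ω, C ω) = (b, c)) := by
      intro hb; exact h ⟨congrArg Prod.fst hb, congrArg Prod.snd hb⟩
    simp [h', h'']

lemma condIndep_marg (A : Ω → α) (B1 : Ω → β) (B2 : Ω → δ) (C : Ω → γ)
    (h : CondIndep p A (fun ω => (B1 ω, B2 ω)) C) : CondIndep p A B1 C := by
  intro a b c
  rw [distOf_marg_mid p A B1 B2 C a b c, distOf_marg_mid2 p B1 B2 C b c,
      Finset.sum_mul, Finset.mul_sum]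
  exact Finset.sum_congr rfl fun d _ => h a (b, d) c

end Aux4
/-- under the log-loss, MER_log − MEMR_log = I(Z_{1:N}; Y | X, Z) ≥ 0,
provided Y ⊥ (Z, Z_{1:N}) | (X, W); hence meta-learning never has larger minimum
excess risk than conventional learning. -/
theorem mer_minus_memr_eq_cmi
    {Ω 𝒳 𝒴 ζ τ 𝒲 : Type*} [Fintype Ω] [Fintype 𝒳] [Fintype 𝒴] [Fintype ζ]
    [Fintype τ] [Fintype 𝒲]
    [DecidableEq 𝒳] [DecidableEq 𝒴] [DecidableEq ζ] [DecidableEq τ] [DecidableEq 𝒲]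
    (p : Ω → ℝ) (hp : IsPMF p)
    (X : Ω → 𝒳) (Y : Ω → 𝒴) (Z : Ω → ζ) (Z1N : Ω → τ) (W : Ω → 𝒲)
    (hci : CondIndep p Y (fun ω => (Z ω, Z1N ω)) (fun ω => (X ω, W ω))) :
    cmiOf p Y W (fun ω => (X ω, Z ω)) - cmiOf p Y W (fun ω => (X ω, Z ω, Z1N ω)) =
      cmiOf p Y Z1N (fun ω => (X ω, Z ω)) ∧
    0 ≤ cmiOf p Y Z1N (fun ω => (X ω, Z ω)) := by
  have hp0 := hp
  -- equivalences for relabelling the conditioning variables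
  let e1 : (𝒳 × ζ × τ) ≃ (τ × 𝒳 × ζ) :=
    ⟨fun x => (x.2.2, x.1, x.2.1), fun y => (y.2.1, y.2.2, y.1),
      fun x => rfl, fun y => rfl⟩
  let e2 : (ζ × 𝒳 × 𝒲) ≃ (𝒲 × 𝒳 × ζ) :=
    ⟨fun x => (x.2.2, x.2.1, x.1), fun y => (y.2.2, y.2.1, y.1),
      fun x => rfl, fun y => rfl⟩
  let e3 : ((ζ × τ) × 𝒳 × 𝒲) ≃ (𝒲 × 𝒳 × ζ × τ) :=
    ⟨fun x => (x.2.2, x.2.1, x.1.1, x.1.2), fun y => ((y.2.2.1, y.2.2.2), y.2.1, y.1),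
      fun x => rfl, fun y => rfl⟩
  have eq1 : condEntOf p Y (fun ω => (Z1N ω, X ω, Z ω))
      = condEntOf p Y (fun ω => (X ω, Z ω, Z1N ω)) :=
    condEntOf_comp_equiv p Y (fun ω => (X ω, Z ω, Z1N ω)) e1
  have eq2 : condEntOf p Y (fun ω => (W ω, X ω, Z ω))
      = condEntOf p Y (fun ω => (Z ω, X ω, W ω)) :=
    condEntOf_comp_equiv p Y (fun ω => (Z ω, X ω, W ω)) e2
  have eq3 : condEntOf p Y (fun ω => (W ω, X ω, Z ω, Z1N ω))
      = condEntOf p Y (fun ω => ((Z ω, Z1N ω), X ω, W ω)) :=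
    condEntOf_comp_equiv p Y (fun ω => ((Z ω, Z1N ω), X ω, W ω)) e3
  have c1 : condEntOf p Y (fun ω => ((Z ω, Z1N ω), X ω, W ω))
      = condEntOf p Y (fun ω => (X ω, W ω)) :=
    condEntOf_of_condIndep p hp Y (fun ω => (Z ω, Z1N ω)) (fun ω => (X ω, W ω)) hci
  have hciZ : CondIndep p Y Z (fun ω => (X ω, W ω)) :=
    condIndep_marg p Y Z Z1N (fun ω => (X ω, W ω)) hci
  have c2 : condEntOf p Y (fun ω => (Z ω, X ω, W ω))
      = condEntOf p Y (fun ω => (X ω, W ω)) :=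
    condEntOf_of_condIndep p hp Y Z (fun ω => (X ω, W ω)) hciZ
  constructor
  · simp only [cmiOf]
    linarith [eq1, eq2, eq3, c1, c2]
  · exact cmiOf_nonneg p hp Y Z1N (fun ω => (X ω, Z ω))
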